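/- arXiv:2201.05741 — 2 statements merged into one kernel-verified Lean document; each statement's English description precedes it below -/
import Mathlib

section
/- Let x₀ ∈ ℝ^n and let {x_k} be the sketch-and-project iterates with arbitrary sketching matrices {S_k}. On the event {τ₁ < ∞}, there exists γ₁ ∈ (0,1), which is a measurable function of (Q₁,…,Q_{τ₁}), such that ‖x_{τ₁} − x*‖_B ≤ γ₁ ‖x₀ − x*‖_B. -/
open MeasureTheory ProbabilityTheory Matrix Finset Filter

noncomputable section

/-- The Moore–Penrose pseudoinverse of a real matrix, defined via classical choice
as a matrix satisfying the four Penrose equations (such a matrix exists and is unique). -/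
noncomputable def mpinv {a b : ℕ} (M : Matrix (Fin a) (Fin b) ℝ) : Matrix (Fin b) (Fin a) ℝ :=
  Classical.epsilon fun X => M * X * M = M ∧ X * M * X = X ∧ (M * X)ᵀ = M * X ∧ (X * M)ᵀ = X * M

/-- The Euclidean norm of a vector in `Fin a → ℝ`. -/
noncomputable def nrm2 {a : ℕ} (v : Fin a → ℝ) : ℝ := Real.sqrt (∑ i, v i ^ 2)

/-- The spectral norm (ℓ₂ operator norm) of a matrix. -/
noncomputable def specNorm {a b : ℕ} (M : Matrix (Fin a) (Fin b) ℝ) : ℝ :=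
  sInf {c | 0 ≤ c ∧ ∀ v, nrm2 (M *ᵥ v) ≤ c * nrm2 v}

/-- The row space of a matrix, as a submodule of `Fin b → ℝ`. -/
def rowSpace {a b : ℕ} (M : Matrix (Fin a) (Fin b) ℝ) : Submodule ℝ (Fin b → ℝ) :=
  Submodule.span ℝ (Set.range M)

/-- The column space of a matrix, as a submodule of `Fin a → ℝ`. -/
def colSpace {a b : ℕ} (M : Matrix (Fin a) (Fin b) ℝ) : Submodule ℝ (Fin a → ℝ) :=
  rowSpace Mᵀ

/-- One step of the sketch-and-project iteration:
`x ↦ x − B⁻¹Aᵀ Sₖ (Sₖᵀ A B⁻¹ Aᵀ Sₖ)† Sₖᵀ (A x − b)`. -/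
noncomputable def spStep {m n p : ℕ} (A : Matrix (Fin m) (Fin n) ℝ)
    (B : Matrix (Fin n) (Fin n) ℝ) (b : Fin m → ℝ)
    (Sk : Matrix (Fin m) (Fin p) ℝ) (xk : Fin n → ℝ) : Fin n → ℝ :=
  xk - (B⁻¹ * Aᵀ * Sk * mpinv (Skᵀ * A * B⁻¹ * Aᵀ * Sk) * Skᵀ) *ᵥ (A *ᵥ xk - b)

instance matrixMeasurableSpace {a b : ℕ} : MeasurableSpace (Matrix (Fin a) (Fin b) ℝ) :=
  MeasurableSpace.pi

/-- The `(C, ω)` sub-exponential Johnson–Lindenstrauss property of a random `m × p` matrix. -/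
def jlProperty {m p : ℕ} {Ω : Type*} [MeasurableSpace Ω] (μ : Measure Ω)
    (S : Ω → Matrix (Fin m) (Fin p) ℝ) (C ω : ℝ) : Prop :=
  0 < C ∧ 0 < ω ∧ ∀ z : Fin m → ℝ,
    (∀ t : ℝ, |t| ≤ 1 / ω →
      ∫ a, Real.exp (t * (nrm2 ((S a)ᵀ *ᵥ z) ^ 2 - nrm2 z ^ 2)) ∂μ ≤
        Real.exp (t ^ 2 * nrm2 z ^ 4 / (2 * C * p))) ∧
    (∀ δ : ℝ, 0 < δ →
      μ {a | δ * nrm2 z ^ 2 < |nrm2 ((S a)ᵀ *ᵥ z) ^ 2 - nrm2 z ^ 2|} ≤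
        ENNReal.ofReal (2 * Real.exp (-min (C * p * δ ^ 2) (C * p * δ / ω))))

/-- `σ`-algebra generated by the sketching matrices `S₁, …, S_j`. -/
def sigmaF {m p : ℕ} {Ω : Type*} [MeasurableSpace Ω]
    (S : ℕ → Ω → Matrix (Fin m) (Fin p) ℝ) (j : ℕ) : MeasurableSpace Ω :=
  ⨆ i ∈ Finset.Icc 1 j, MeasurableSpace.comap (S i) inferInstance

/-- The smallest nonzero singular value of a matrix. -/
noncomputable def sigmaMinPos {a b : ℕ} (M : Matrix (Fin a) (Fin b) ℝ) : ℝ :=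
  sInf {c | ∃ v ∈ rowSpace M, v ≠ 0 ∧ c = nrm2 (M *ᵥ v) / nrm2 v}

/-!
In the coordinates `e k = B^{1/2} (x k - x*)` a sketch-and-project step reads
`e (k+1) = e k - P (k+1) (e k)`, where `P k` is the orthogonal projector onto
`row (S_kᵀ A B^{-1/2})`. Hence `‖e k‖` is nonincreasing, and it stays constant up to `τ₁`
only if every `P k` with `k ≤ τ₁` fixes `e 0`, i.e. only if `e 0` is orthogonal to
`row (S_1ᵀ A B^{-1/2}) + ⋯ + row (S_τ₁ᵀ A B^{-1/2}) = row (A B^{-1/2})`. Then `A x₀ = b`,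
and since `x*` is the `B`-projection of `x₀` onto the solutions, `e 0 = 0`. So either
`‖e τ₁‖ < ‖e 0‖` or both vanish, and any `γ₁ ∈ (‖e τ₁‖ / ‖e 0‖, 1)` works.
-/

theorem Matrix.IsHermitian.exists_penrose_inverse {ι : Type*} [Fintype ι] [DecidableEq ι]
    {G : Matrix ι ι ℝ} (hG : G.IsHermitian) :
    ∃ X : Matrix ι ι ℝ, G * X * G = G ∧ X * G * X = X ∧ (G * X)ᵀ = G * X ∧ (X * G)ᵀ = X * G := by
  have hmul (f g : ℝ → ℝ) : cfc f G * cfc g G = cfc (fun x => f x * g x) G :=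
    (cfc_mul f g G (G.finite_spectrum.continuousOn f) (G.finite_spectrum.continuousOn g)).symm
  have hsymm (f : ℝ → ℝ) : (cfc f G)ᵀ = cfc f G := IsSelfAdjoint.cfc.star_eq
  have hGf (f : ℝ → ℝ) : G * cfc f G = cfc (fun x => x * f x) G := by
    nth_rw 1 [← cfc_id' ℝ G]; exact hmul _ f
  have hfG (f : ℝ → ℝ) : cfc f G * G = cfc (fun x => f x * x) G := by
    nth_rw 2 [← cfc_id' ℝ G]; exact hmul f _
  refine ⟨cfc (fun x : ℝ => x⁻¹) G, ?_, ?_, ?_, ?_⟩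
  · rw [hGf, hfG]
    simpa only [mul_inv_mul_cancel] using cfc_id' ℝ G
  · rw [hfG, hmul]
    congr 1; funext x; simpa using mul_inv_mul_cancel x⁻¹
  · rw [hGf, hsymm]
  · rw [hfG, hsymm]

theorem mul_mpinv_mul_self_of_isHermitian {a : ℕ} {G : Matrix (Fin a) (Fin a) ℝ}
    (hG : G.IsHermitian) : G * mpinv G * G = G :=
  (Classical.epsilon_spec hG.exists_penrose_inverse).1

theorem mulVec_eq_zero_iff_rowSpace_le {a b : ℕ} {M : Matrix (Fin a) (Fin b) ℝ}
    {v : Fin b → ℝ} : M *ᵥ v = 0 ↔ rowSpace M ≤ LinearMap.ker (dotProductEquiv ℝ (Fin b) v) := by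
  rw [rowSpace, Submodule.span_le, funext_iff]
  simp [Set.subset_def, mulVec, dotProduct_comm, Set.forall_mem_range (f := fun i => M i)]

theorem mulVec_eq_zero_of_rowSpace_le_iSup {a b c : ℕ} {s : Finset ℕ}
    {M : ℕ → Matrix (Fin a) (Fin b) ℝ} {N : Matrix (Fin c) (Fin b) ℝ} {v : Fin b → ℝ}
    (hle : rowSpace N ≤ ⨆ i ∈ s, rowSpace (M i)) (h : ∀ i ∈ s, M i *ᵥ v = 0) : N *ᵥ v = 0 :=
  mulVec_eq_zero_iff_rowSpace_le.2 <|
    hle.trans <| iSup₂_le fun i hi => mulVec_eq_zero_iff_rowSpace_le.1 (h i hi)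

def rowSpaceProj {c r : ℕ} (M : Matrix (Fin c) (Fin r) ℝ) : Matrix (Fin r) (Fin r) ℝ :=
  Mᵀ * mpinv (M * Mᵀ) * M

section rowSpaceProj

variable {c r : ℕ} (M : Matrix (Fin c) (Fin r) ℝ)

theorem mul_rowSpaceProj : M * rowSpaceProj M = M := by
  set G := M * Mᵀ
  have hG : G * mpinv G * G = G :=
    mul_mpinv_mul_self_of_isHermitian (by simp [G, IsHermitian])
  set K := 1 - G * mpinv G
  have hKG : K * G = 0 := by rw [Matrix.sub_mul, Matrix.one_mul, hG, sub_self]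
  have hKM : K * M = 0 := by
    refine self_mul_conjTranspose_eq_zero.1 ?_
    calc K * M * (K * M)ᴴ = K * G * Kᴴ := by
          simp only [G, conjTranspose_eq_transpose_of_trivial, transpose_mul, Matrix.mul_assoc]
    _ = 0 := by rw [hKG, Matrix.zero_mul]
  rw [Matrix.sub_mul, Matrix.one_mul, sub_eq_zero] at hKM
  calc M * rowSpaceProj M = G * mpinv G * M := by simp only [rowSpaceProj, G, Matrix.mul_assoc]
  _ = M := hKM.symm

theorem mulVec_eq_zero_of_rowSpaceProj_mulVec_eq_zero {v : Fin r → ℝ}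
    (h : rowSpaceProj M *ᵥ v = 0) : M *ᵥ v = 0 := by
  rw [← mul_rowSpaceProj M, ← mulVec_mulVec, h, mulVec_zero]

theorem dotProduct_self_sub_rowSpaceProj (v : Fin r → ℝ) :
    (v - rowSpaceProj M *ᵥ v) ⬝ᵥ (v - rowSpaceProj M *ᵥ v) =
      v ⬝ᵥ v - (rowSpaceProj M *ᵥ v) ⬝ᵥ (rowSpaceProj M *ᵥ v) := by
  have hw : rowSpaceProj M *ᵥ v = Mᵀ *ᵥ ((mpinv (M * Mᵀ) * M) *ᵥ v) := by
    simp only [rowSpaceProj, mulVec_mulVec, Matrix.mul_assoc]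
  have hker : M *ᵥ (v - rowSpaceProj M *ᵥ v) = 0 := by
    rw [mulVec_sub, mulVec_mulVec, mul_rowSpaceProj, sub_self]
  have hperp : (v - rowSpaceProj M *ᵥ v) ⬝ᵥ (rowSpaceProj M *ᵥ v) = 0 := by
    rw [hw, dotProduct_mulVec, vecMul_transpose, ← hw, hker, zero_dotProduct]
  simp only [sub_dotProduct, dotProduct_sub, dotProduct_comm _ v] at hperp ⊢
  linarith

end rowSpaceProj

theorem mulVec_spStep_sub {m n p : ℕ} (A : Matrix (Fin m) (Fin n) ℝ) (b : Fin m → ℝ)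
    {H : Matrix (Fin n) (Fin n) ℝ} (hH : IsUnit H.det) (hHsymm : Hᵀ = H)
    (S : Matrix (Fin m) (Fin p) ℝ) (x xs : Fin n → ℝ) (hxs : A *ᵥ xs = b) :
    H *ᵥ (spStep A (H * H) b S x - xs) =
      H *ᵥ (x - xs) - rowSpaceProj (Sᵀ * A * H⁻¹) *ᵥ (H *ᵥ (x - xs)) := by
  have hHinv : (H⁻¹)ᵀ = H⁻¹ := by rw [transpose_nonsing_inv, hHsymm]
  have hres : A *ᵥ x - b = A *ᵥ (x - xs) := by rw [mulVec_sub, hxs]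
  rw [spStep, hres, sub_right_comm, mulVec_sub H, rowSpaceProj, Matrix.mul_inv_rev]
  simp only [transpose_mul, transpose_transpose, hHinv, mulVec_mulVec, Matrix.mul_assoc,
    mul_nonsing_inv_cancel_left _ _ hH, nonsing_inv_mul _ hH, Matrix.mul_one]

theorem dotProduct_self_nonneg {ι : Type*} [Fintype ι] (v : ι → ℝ) : 0 ≤ v ⬝ᵥ v :=
  Finset.sum_nonneg fun i _ => mul_self_nonneg (v i)

theorem nrm2_eq_sqrt_dotProduct {a : ℕ} (v : Fin a → ℝ) : nrm2 v = √(v ⬝ᵥ v) := by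
  simp [nrm2, dotProduct, sq]

theorem nrm2_nonneg {a : ℕ} (v : Fin a → ℝ) : 0 ≤ nrm2 v := Real.sqrt_nonneg _

theorem nrm2_eq_zero_iff {a : ℕ} {v : Fin a → ℝ} : nrm2 v = 0 ↔ v = 0 := by
  rw [nrm2_eq_sqrt_dotProduct, Real.sqrt_eq_zero (dotProduct_self_nonneg v),
    dotProduct_self_eq_zero]

def IsProjectionIteration {c r : ℕ} (M : ℕ → Matrix (Fin c) (Fin r) ℝ) (e : ℕ → Fin r → ℝ) :
    Prop :=
  ∀ k, e (k + 1) = e k - rowSpaceProj (M (k + 1)) *ᵥ e k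

namespace IsProjectionIteration

variable {c r : ℕ} {M : ℕ → Matrix (Fin c) (Fin r) ℝ} {e : ℕ → Fin r → ℝ}

theorem antitone_dotProduct_self (hrec : IsProjectionIteration M e) :
    Antitone fun k => e k ⬝ᵥ e k :=
  antitone_nat_of_succ_le fun k => by
    rw [hrec k, dotProduct_self_sub_rowSpaceProj]
    exact sub_le_self _ (dotProduct_self_nonneg _)

theorem mulVec_eq_zero_of_dotProduct_self_le (hrec : IsProjectionIteration M e) {τ : ℕ}
    (h : e 0 ⬝ᵥ e 0 ≤ e τ ⬝ᵥ e τ) : e τ = e 0 ∧ ∀ k ∈ Finset.Icc 1 τ, M k *ᵥ e 0 = 0 := by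
  induction τ with
  | zero => simp
  | succ τ ih =>
    obtain ⟨hτ, hM⟩ := ih (h.trans (hrec.antitone_dotProduct_self τ.le_succ))
    have hstep := hrec τ
    rw [hτ] at hstep
    have hP : rowSpaceProj (M (τ + 1)) *ᵥ e 0 = 0 := by
      have hpyth := dotProduct_self_sub_rowSpaceProj (M (τ + 1)) (e 0)
      rw [← hstep] at hpyth
      exact dotProduct_self_eq_zero.1 <| le_antisymm (by linarith) (dotProduct_self_nonneg _)
    refine ⟨by rw [hstep, hP, sub_zero], fun k hk => ?_⟩
    rcases (Finset.mem_Icc.1 hk).2.lt_or_eq with hk' | rfl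
    · exact hM k (Finset.mem_Icc.2 ⟨(Finset.mem_Icc.1 hk).1, Nat.lt_succ_iff.1 hk'⟩)
    · exact mulVec_eq_zero_of_rowSpaceProj_mulVec_eq_zero _ hP

theorem nrm2_lt_or_eq_zero {d : ℕ} {N : Matrix (Fin d) (Fin r) ℝ} {τ : ℕ}
    (hrec : IsProjectionIteration M e)
    (hcover : rowSpace N ≤ ⨆ i ∈ Finset.Icc 1 τ, rowSpace (M i))
    (hN : N *ᵥ e 0 = 0 → e 0 = 0) :
    nrm2 (e τ) < nrm2 (e 0) ∨ nrm2 (e τ) = 0 := by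
  rcases lt_or_ge (e τ ⬝ᵥ e τ) (e 0 ⬝ᵥ e 0) with hlt | hge
  · rw [nrm2_eq_sqrt_dotProduct, nrm2_eq_sqrt_dotProduct]
    exact .inl (Real.sqrt_lt_sqrt (dotProduct_self_nonneg _) hlt)
  · obtain ⟨hτ, hM⟩ := hrec.mulVec_eq_zero_of_dotProduct_self_le hge
    rw [hτ, hN (mulVec_eq_zero_of_rowSpace_le_iSup hcover hM), nrm2_eq_zero_iff]
    exact .inr rfl

end IsProjectionIteration

theorem exists_mem_Ioo_mul_le {L R : ℝ} (hL : 0 ≤ L) (hR : 0 ≤ R) (h : L < R ∨ L = 0) :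
    ∃ γ ∈ Set.Ioo (0 : ℝ) 1, L ≤ γ * R := by
  rcases h with h | rfl
  · have hR : 0 < R := hL.trans_lt h
    refine ⟨(L + R) / (2 * R), ⟨by positivity, (div_lt_one (by positivity)).2 (by linarith)⟩, ?_⟩
    rw [div_mul_eq_mul_div, le_div_iff₀ (by positivity)]
    nlinarith
  · exact ⟨1 / 2, by norm_num, by positivity⟩

theorem Matrix.PosDef.isUnit_det_of_mul_self_eq {n : Type*} [Fintype n] [DecidableEq n]
    {B H : Matrix n n ℝ} (hB : B.PosDef) (hH : H * H = B) : IsUnit H.det :=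
  isUnit_of_mul_isUnit_left (y := H.det) <| by
    rw [← det_mul, hH]
    exact (isUnit_iff_isUnit_det B).1 hB.isUnit

theorem stmt3_general {m n p : ℕ} (A : Matrix (Fin m) (Fin n) ℝ) (b : Fin m → ℝ)
    (B Bhalf : Matrix (Fin n) (Fin n) ℝ) (hB : B.PosDef)
    (hBsymm : Bhalfᵀ = Bhalf) (hBsq : Bhalf * Bhalf = B)
    (S : ℕ → Matrix (Fin m) (Fin p) ℝ)
    (x₀ : Fin n → ℝ) (x : ℕ → Fin n → ℝ)
    (hx0 : x 0 = x₀) (hxrec : ∀ k, x (k + 1) = spStep A B b (S (k + 1)) (x k))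
    (xstar : Fin n → ℝ) (hsol : A *ᵥ xstar = b)
    (hproj : ∀ y, A *ᵥ y = b →
      nrm2 (Bhalf *ᵥ (x₀ - xstar)) ≤ nrm2 (Bhalf *ᵥ (x₀ - y)))
    -- `Q k` has orthonormal columns forming a basis of `row(S_kᵀ A B^{-1/2})`
    (q : ℕ → ℕ) (Q : ∀ k, Matrix (Fin n) (Fin (q k)) ℝ)
    (hQspan : ∀ k, colSpace (Q k) = rowSpace ((S k)ᵀ * A * Bhalf⁻¹))
    -- `τ₁` is finite: it is the smallest `k ≥ 1` with
    -- `col(Q₁) + ⋯ + col(Q_k) = row(AB^{-1/2})`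
    (τ₁ : ℕ)
    (hτ₁ : (⨆ i ∈ Finset.Icc 1 τ₁, colSpace (Q i)) = rowSpace (A * Bhalf⁻¹)) :
    ∃ γ₁ ∈ Set.Ioo (0 : ℝ) 1,
      nrm2 (Bhalf *ᵥ (x τ₁ - xstar)) ≤ γ₁ * nrm2 (Bhalf *ᵥ (x₀ - xstar)) := by
  have hH : IsUnit Bhalf.det := hB.isUnit_det_of_mul_self_eq hBsq
  obtain ⟨e, he⟩ : ∃ e : ℕ → Fin n → ℝ, ∀ k, e k = Bhalf *ᵥ (x k - xstar) := ⟨_, fun _ => rfl⟩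
  obtain ⟨M, hM⟩ : ∃ M : ℕ → Matrix (Fin p) (Fin n) ℝ, ∀ k, M k = (S k)ᵀ * A * Bhalf⁻¹ :=
    ⟨_, fun _ => rfl⟩
  have hrec : IsProjectionIteration M e := fun k => by
    rw [he, he, hM, hxrec k, ← hBsq]
    exact mulVec_spStep_sub A b hH hBsymm _ _ _ hsol
  have hcover : rowSpace (A * Bhalf⁻¹) ≤ ⨆ i ∈ Finset.Icc 1 τ₁, rowSpace (M i) := by
    simp only [← hτ₁, hQspan, hM, le_rfl]
  have hsolved : (A * Bhalf⁻¹) *ᵥ e 0 = 0 → e 0 = 0 := by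
    intro hAe
    rw [he, mulVec_mulVec, Matrix.mul_assoc, nonsing_inv_mul _ hH, Matrix.mul_one, mulVec_sub,
      hsol, sub_eq_zero, hx0] at hAe
    have h0 := hproj x₀ hAe
    rw [sub_self, mulVec_zero, nrm2_eq_zero_iff.2 rfl, ← hx0, ← he] at h0
    exact nrm2_eq_zero_iff.1 (h0.antisymm (nrm2_nonneg _))
  rw [← hx0, ← he, ← he]
  exact exists_mem_Ioo_mul_le (nrm2_nonneg _) (nrm2_nonneg _)
    (hrec.nrm2_lt_or_eq_zero hcover hsolved)

/-- On the event `{τ₁ < ∞}` (here: for any realization for which the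
first covering time `τ₁` is a finite number), there exists `γ₁ ∈ (0,1)` such that
`‖x_{τ₁} − x*‖_B ≤ γ₁ ‖x₀ − x*‖_B`. -/
theorem stmt3 {m n p : ℕ} (A : Matrix (Fin m) (Fin n) ℝ) (b : Fin m → ℝ)
    (hconsistent : ∃ y, A *ᵥ y = b)
    (B Bhalf : Matrix (Fin n) (Fin n) ℝ) (hB : B.PosDef)
    (hBsymm : Bhalfᵀ = Bhalf) (hBsq : Bhalf * Bhalf = B)
    (S : ℕ → Matrix (Fin m) (Fin p) ℝ)
    (x₀ : Fin n → ℝ) (x : ℕ → Fin n → ℝ)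
    (hx0 : x 0 = x₀) (hxrec : ∀ k, x (k + 1) = spStep A B b (S (k + 1)) (x k))
    (xstar : Fin n → ℝ) (hsol : A *ᵥ xstar = b)
    (hproj : ∀ y, A *ᵥ y = b →
      nrm2 (Bhalf *ᵥ (x₀ - xstar)) ≤ nrm2 (Bhalf *ᵥ (x₀ - y)))
    -- `Q k` has orthonormal columns forming a basis of `row(S_kᵀ A B^{-1/2})`
    (q : ℕ → ℕ) (Q : ∀ k, Matrix (Fin n) (Fin (q k)) ℝ)
    (hQorth : ∀ k, (Q k)ᵀ * Q k = 1)
    (hQspan : ∀ k, colSpace (Q k) = rowSpace ((S k)ᵀ * A * Bhalf⁻¹))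
    -- `τ₁` is finite: it is the smallest `k ≥ 1` with
    -- `col(Q₁) + ⋯ + col(Q_k) = row(AB^{-1/2})`
    (τ₁ : ℕ) (hτ₁pos : 1 ≤ τ₁)
    (hτ₁ : (⨆ i ∈ Finset.Icc 1 τ₁, colSpace (Q i)) = rowSpace (A * Bhalf⁻¹))
    (hτ₁min : ∀ k < τ₁, (⨆ i ∈ Finset.Icc 1 k, colSpace (Q i)) ≠ rowSpace (A * Bhalf⁻¹)) :
    ∃ γ₁ ∈ Set.Ioo (0 : ℝ) 1,
      nrm2 (Bhalf *ᵥ (x τ₁ - xstar)) ≤ γ₁ * nrm2 (Bhalf *ᵥ (x₀ - xstar)) :=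
  stmt3_general A b B Bhalf hB hBsymm hBsq S x₀ x hx0 hxrec xstar hsol hproj q Q hQspan τ₁ hτ₁

end
end

section
/- Let {S_k : k ∈ ℕ} be independent and identically distributed random m×p matrices. Then, whenever they exist, the increments {τ_ℓ − τ_{ℓ−1} : ℓ ∈ ℕ} are independent and identically distributed; moreover, for any fixed measurable function g of the blocks, the random variables γ_ℓ := g(Q_{τ_{ℓ−1}+1},…,Q_{τ_ℓ}) are independent and identically distributed across ℓ. -/
open MeasureTheory ProbabilityTheory Matrix Finset Filter

noncomputable section

/-!
The covering times are renewal times of the i.i.d. sequence `X j = S (j + 1)`: the block after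
`τ_ℓ` has length `d(X_{τ_ℓ}, X_{τ_ℓ + 1}, …)`, where `d` is the first index at which the row
spaces seen so far fill `row(A B^{-1/2})`, and whether `d = δ` is decided by the first `δ` terms.
Hence `{τ_ℓ = t}`, together with all earlier blocks, is an event of `X_0, …, X_{t-1}`, which is
independent of the shifted sequence `(X_{t+j})_j`, itself distributed like `(X_j)_j`. Summing
over `t` gives
`P(γ_0 ∈ B_0, …, γ_L ∈ B_L) = P(γ_0 ∈ B_0, …, γ_{L-1} ∈ B_{L-1}) P(γ_0 ∈ B_L)`,
and induction on `L` shows that the blocks are i.i.d.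
-/

def firstIndexAfter (t : ℕ∞) (P : ℕ → Prop) : ℕ∞ :=
  sInf {e : ℕ∞ | t < e ∧ ∃ k : ℕ, e = k ∧ P k}

section FirstIndexAfter

variable {P : ℕ → Prop}

theorem firstIndexAfter_top : firstIndexAfter ⊤ P = ⊤ := by
  simp [firstIndexAfter]

theorem firstIndexAfter_coe (t : ℕ) :
    firstIndexAfter t P = t + firstIndexAfter 0 (fun k => P (t + k)) := by
  have himage : {e : ℕ∞ | (t : ℕ∞) < e ∧ ∃ k : ℕ, e = k ∧ P k} =
      (fun e => (t : ℕ∞) + e) '' {e | 0 < e ∧ ∃ k : ℕ, e = k ∧ P (t + k)} := by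
    ext e
    constructor
    · rintro ⟨hte, k, rfl, hk⟩
      have htk : t < k := by exact_mod_cast hte
      refine ⟨(k - t : ℕ), ⟨by exact_mod_cast Nat.sub_pos_of_lt htk, k - t, rfl, ?_⟩, ?_⟩
      · rwa [Nat.add_sub_cancel' htk.le]
      · show (t : ℕ∞) + ((k - t : ℕ) : ℕ∞) = k
        rw [← Nat.cast_add, Nat.add_sub_cancel' htk.le]
    · rintro ⟨_, ⟨he, k, rfl, hk⟩, rfl⟩
      have hk0 : 0 < k := by exact_mod_cast he
      refine ⟨?_, t + k, by push_cast; rfl, hk⟩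
      show (t : ℕ∞) < t + k
      exact_mod_cast Nat.lt_add_of_pos_right hk0
  rw [firstIndexAfter, himage, sInf_image, firstIndexAfter, sInf_eq_iInf, ENat.add_iInf₂]

theorem firstIndexAfter_zero_eq_coe_iff {δ : ℕ} :
    firstIndexAfter 0 P = δ ↔ 0 < δ ∧ P δ ∧ ∀ k, 0 < k → k < δ → ¬P k := by
  constructor
  · intro hδ
    have hne : {e : ℕ∞ | 0 < e ∧ ∃ k : ℕ, e = k ∧ P k}.Nonempty := by
      by_contra hne
      rw [Set.not_nonempty_iff_eq_empty] at hne
      simp [firstIndexAfter, hne] at hδ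
    have hmem := csInf_mem hne
    rw [← firstIndexAfter, hδ] at hmem
    obtain ⟨he, k, hk, hPk⟩ := hmem
    obtain rfl : δ = k := by exact_mod_cast hk
    refine ⟨by exact_mod_cast he, hPk, fun j hj hjδ hPj => ?_⟩
    have : (δ : ℕ∞) ≤ j := hδ ▸ sInf_le ⟨by exact_mod_cast hj, j, rfl, hPj⟩
    exact absurd (by exact_mod_cast this) (not_le.mpr hjδ)
  · rintro ⟨hδ, hPδ, hmin⟩
    refine le_antisymm (sInf_le ⟨by exact_mod_cast hδ, δ, rfl, hPδ⟩) (le_sInf ?_)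
    rintro _ ⟨he, k, rfl, hPk⟩
    by_contra! hlt
    exact hmin k (by exact_mod_cast he) (by exact_mod_cast hlt) hPk

theorem firstIndexAfter_zero_eq_top_iff :
    firstIndexAfter 0 P = ⊤ ↔ ∀ k, 0 < k → ¬P k := by
  simp only [firstIndexAfter, sInf_eq_top, Set.mem_ofPred_eq]
  constructor
  · intro h k hk hPk
    simpa using h k ⟨by exact_mod_cast hk, k, rfl, hPk⟩
  · rintro h _ ⟨he, k, rfl, hk⟩
    exact absurd hk (h k (by exact_mod_cast he))

end FirstIndexAfter

theorem measurable_firstIndexAfter_zero {α : Type*} [MeasurableSpace α] {P : ℕ → α → Prop}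
    (hP : ∀ k, Measurable (P k)) : Measurable fun x => firstIndexAfter 0 (P · x) := by
  refine measurable_to_countable' fun e => ?_
  induction e using ENat.recTopCoe with
  | top =>
    simp only [Set.preimage, Set.mem_singleton_iff, firstIndexAfter_zero_eq_top_iff]
    exact measurableSet_setOfPred.2 <| .forall fun k => .forall fun _ => (hP k).not
  | coe δ =>
    simp only [Set.preimage, Set.mem_singleton_iff, firstIndexAfter_zero_eq_coe_iff]
    exact measurableSet_setOfPred.2 <| measurable_const.and <|
      (hP δ).and <| .forall fun k => .forall fun _ => .forall fun _ => (hP k).not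

section Renewal

variable {E β : Type*}

/-- `DeterminedBy d d` says that `d` is a stopping rule. -/
def DeterminedBy (d : (ℕ → E) → ℕ∞) (F : (ℕ → E) → β) : Prop :=
  ∀ (δ : ℕ) (h h' : ℕ → E), (∀ i < δ, h i = h' i) → d h = δ → F h = F h'

theorem determinedBy_firstIndexAfter_zero {P : ℕ → (ℕ → E) → Prop}
    (hP : ∀ k h h', (∀ i < k, h i = h' i) → P k h → P k h') :
    DeterminedBy (fun h => firstIndexAfter 0 (P · h)) (fun h => firstIndexAfter 0 (P · h)) := by
  intro δ h h' hhh' hδ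
  simp only at hδ ⊢
  rw [hδ, eq_comm, firstIndexAfter_zero_eq_coe_iff]
  rw [firstIndexAfter_zero_eq_coe_iff] at hδ
  obtain ⟨hδ0, hPδ, hmin⟩ := hδ
  refine ⟨hδ0, hP δ h h' hhh' hPδ, fun k hk hkδ hPk => hmin k hk hkδ ?_⟩
  exact hP k h' h (fun i hi => (hhh' i (hi.trans hkδ)).symm) hPk

def dropSeq (t : ℕ) (h : ℕ → E) : ℕ → E := fun j => h (t + j)

theorem measurable_dropSeq [MeasurableSpace E] (t : ℕ) : Measurable (dropSeq (E := E) t) :=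
  measurable_pi_lambda _ fun _ => measurable_pi_apply _

variable (d : (ℕ → E) → ℕ∞)

/-- `⊤` is absorbing (`⊤ + x = ⊤`), so the junk value `(⊤ : ℕ∞).toNat = 0` never matters. -/
def renewalTime : ℕ → (ℕ → E) → ℕ∞
  | 0, _ => 0
  | ℓ + 1, h => renewalTime ℓ h + d (dropSeq (renewalTime ℓ h).toNat h)

def renewalBlock (F : (ℕ → E) → β) (ℓ : ℕ) (h : ℕ → E) : β :=
  F (dropSeq (renewalTime d ℓ h).toNat h)

variable {d}

theorem renewalTime_succ_of_eq_coe {ℓ t : ℕ} {h : ℕ → E} (hT : renewalTime d ℓ h = t) :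
    renewalTime d (ℓ + 1) h = t + d (dropSeq t h) := by
  rw [renewalTime, hT, ENat.toNat_natCast]

theorem renewalTime_mono (h : ℕ → E) : Monotone (renewalTime d · h) :=
  monotone_nat_of_le_succ fun _ => le_self_add

end Renewal

section RenewalLocality

variable {E β : Type*} {d : (ℕ → E) → ℕ∞}

theorem exists_of_renewalTime_succ_eq_coe {ℓ u : ℕ} {h : ℕ → E}
    (hu : renewalTime d (ℓ + 1) h = u) :
    ∃ s δ : ℕ, renewalTime d ℓ h = s ∧ d (dropSeq s h) = δ ∧ s + δ = u := by
  obtain ⟨s, hs⟩ := ENat.ne_top_iff_exists.1 fun htop : renewalTime d ℓ h = ⊤ => by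
    simp [renewalTime, htop] at hu
  obtain ⟨δ, hδ⟩ := ENat.ne_top_iff_exists.1 fun htop : d (dropSeq s h) = ⊤ => by
    simp [renewalTime_succ_of_eq_coe hs.symm, htop] at hu
  refine ⟨s, δ, hs.symm, hδ.symm, ?_⟩
  rw [renewalTime_succ_of_eq_coe hs.symm, ← hδ] at hu
  exact_mod_cast hu

theorem renewalTime_eq_of_eqOn (hd : DeterminedBy d d) {t : ℕ} {h h' : ℕ → E}
    (hhh' : ∀ i < t, h i = h' i) :
    ∀ (ℓ u : ℕ), renewalTime d ℓ h = u → u ≤ t → renewalTime d ℓ h' = u := by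
  intro ℓ
  induction ℓ with
  | zero => exact fun u hu _ => hu
  | succ ℓ ih =>
    intro u hu hut
    obtain ⟨s, δ, hs, hδ, rfl⟩ := exists_of_renewalTime_succ_eq_coe hu
    have hδ' : d (dropSeq s h') = δ :=
      hδ ▸ hd δ _ _ (fun i hi => hhh' _ (by omega)) hδ |>.symm
    rw [renewalTime_succ_of_eq_coe (ih s hs (by omega)), hδ', Nat.cast_add]

theorem renewalBlock_eq_of_eqOn (hd : DeterminedBy d d) {F : (ℕ → E) → β}
    (hF : DeterminedBy d F) {t L j : ℕ} {h h' : ℕ → E} (hhh' : ∀ i < t, h i = h' i)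
    (hT : renewalTime d L h = t) (hj : j < L) :
    renewalBlock d F j h' = renewalBlock d F j h := by
  have hle : renewalTime d (j + 1) h ≤ t := by
    simpa [hT] using renewalTime_mono (d := d) h (Nat.succ_le_of_lt hj)
  obtain ⟨u, hu⟩ := ENat.ne_top_iff_exists.1 (ne_top_of_le_ne_top (ENat.natCast_ne_top t) hle)
  have hut : u ≤ t := by rw [← hu] at hle; exact_mod_cast hle
  obtain ⟨s, δ, hs, hδ, rfl⟩ := exists_of_renewalTime_succ_eq_coe hu.symm
  rw [renewalBlock, renewalBlock, hs, renewalTime_eq_of_eqOn hd hhh' j s hs (by omega)]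
  exact (hF δ _ _ (fun i hi => hhh' (s + i) (by omega)) hδ).symm

theorem dependsOn_renewalTime_eq_and_renewalBlock_mem (hd : DeterminedBy d d)
    {F : (ℕ → E) → β} (hF : DeterminedBy d F) (L t : ℕ) (B : ℕ → Set β) :
    DependsOn (fun h => renewalTime d L h = t ∧ ∀ j < L, renewalBlock d F j h ∈ B j)
      (Set.Iio t) := by
  have key : ∀ h h' : ℕ → E, (∀ i < t, h i = h' i) →
      (renewalTime d L h = t ∧ ∀ j < L, renewalBlock d F j h ∈ B j) →
      renewalTime d L h' = t ∧ ∀ j < L, renewalBlock d F j h' ∈ B j := by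
    rintro h h' hhh' ⟨hT, hB⟩
    exact ⟨renewalTime_eq_of_eqOn hd hhh' L t hT le_rfl,
      fun j hj => renewalBlock_eq_of_eqOn hd hF hhh' hT hj ▸ hB j hj⟩
  intro h h' hhh'
  exact propext ⟨key h h' hhh', key h' h fun i hi => (hhh' i hi).symm⟩

end RenewalLocality

section RenewalMeasurability

variable {E β : Type*} [MeasurableSpace E] [MeasurableSpace β] {d : (ℕ → E) → ℕ∞}

theorem measurable_renewalTime (hd : Measurable d) (ℓ : ℕ) : Measurable (renewalTime d ℓ) := by
  induction ℓ with
  | zero => exact measurable_const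
  | succ ℓ ih =>
    have hstep : Measurable fun q : ℕ∞ × (ℕ → E) => q.1 + d (dropSeq q.1.toNat q.2) :=
      measurable_from_prod_countable_right fun s =>
        (measurable_of_countable (s + ·)).comp (hd.comp (measurable_dropSeq s.toNat))
    exact hstep.comp (ih.prodMk measurable_id)

theorem measurable_renewalBlock (hd : Measurable d) {F : (ℕ → E) → β} (hF : Measurable F)
    (ℓ : ℕ) : Measurable (renewalBlock d F ℓ) := by
  have hstep : Measurable fun q : ℕ∞ × (ℕ → E) => F (dropSeq q.1.toNat q.2) :=
    measurable_from_prod_countable_right fun s => hF.comp (measurable_dropSeq s.toNat)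
  exact hstep.comp ((measurable_renewalTime hd ℓ).prodMk measurable_id)

end RenewalMeasurability

section BlockSummary

variable {E γ : Type*} {d : (ℕ → E) → ℕ∞}

def blockSummary (d : (ℕ → E) → ℕ∞) (g : ℕ∞ × (ℕ → E) → γ) (h : ℕ → E) : ℕ∞ × γ :=
  (d h, g (d h, h))

theorem determinedBy_blockSummary (hd : DeterminedBy d d) {g : ℕ∞ × (ℕ → E) → γ}
    (hg : ∀ (δ : ℕ∞) (f f' : ℕ → E), (∀ j : ℕ, (j : ℕ∞) < δ → f j = f' j) →
      g (δ, f) = g (δ, f')) :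
    DeterminedBy d (blockSummary d g) := fun δ h h' hhh' hδ => by
  have hδ' : d h' = δ := (hd δ h h' hhh' hδ).symm.trans hδ
  simp only [blockSummary, hδ, hδ', hg δ h h' fun j hj => hhh' j (by exact_mod_cast hj)]

theorem measurable_blockSummary [MeasurableSpace E] [MeasurableSpace γ] (hd : Measurable d)
    {g : ℕ∞ × (ℕ → E) → γ} (hg : Measurable g) : Measurable (blockSummary d g) :=
  hd.prodMk (hg.comp (hd.prodMk measurable_id))

theorem renewalBlock_blockSummary {g : ℕ∞ × (ℕ → E) → γ} {ℓ : ℕ} {h : ℕ → E}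
    (hT : renewalTime d ℓ h ≠ ⊤) :
    renewalBlock d (blockSummary d g) ℓ h =
      (renewalTime d (ℓ + 1) h - renewalTime d ℓ h,
        g (renewalTime d (ℓ + 1) h - renewalTime d ℓ h,
          dropSeq (renewalTime d ℓ h).toNat h)) := by
  obtain ⟨t, ht⟩ := ENat.ne_top_iff_exists.1 hT
  rw [renewalBlock, renewalTime_succ_of_eq_coe ht.symm, ← ht, ENat.toNat_natCast,
    (ENat.addLECancellable_natCast t).add_tsub_cancel_left, blockSummary]

end BlockSummary

section IIDSequence

variable {Ω E : Type*} [MeasurableSpace Ω] [mE : MeasurableSpace E] {μ : Measure Ω}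
  {X : ℕ → Ω → E}

omit [MeasurableSpace Ω] in
theorem measurableSet_preimage_of_dependsOn_Iio {t : ℕ} {C : Set (ℕ → E)}
    (hC : MeasurableSet C) (hCt : DependsOn (· ∈ C) (Set.Iio t)) :
    MeasurableSet[⨆ i ∈ Set.Iio t, mE.comap (X i)] ((fun a j => X j a) ⁻¹' C) := by
  rcases isEmpty_or_nonempty Ω with hΩ | ⟨⟨a₀⟩⟩
  · simp [Set.eq_empty_of_isEmpty]
  -- replace the coordinates from `t` on by those of a fixed sample
  let Z : Ω → ℕ → E := fun a j => if j < t then X j a else X j a₀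
  have hZ : Measurable[⨆ i ∈ Set.Iio t, mE.comap (X i)] Z := by
    refine @measurable_pi_lambda _ _ _ (⨆ i ∈ Set.Iio t, mE.comap (X i)) _ _ fun j => ?_
    by_cases hj : j < t
    · simp only [Z, hj, if_true]
      exact measurable_iff_comap_le.2 (le_iSup₂ (f := fun i _ => mE.comap (X i)) j hj)
    · simp only [Z, hj, if_false]
      exact measurable_const
  have hpre : (fun a j => X j a) ⁻¹' C = Z ⁻¹' C := by
    ext a
    exact (hCt fun i hi => by simp [Z, Set.mem_Iio.1 hi]).to_iff
  exact hpre ▸ hZ hC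

variable (hXm : ∀ k, Measurable (X k)) (hXindep : iIndepFun X μ)
  (hXident : ∀ k, IdentDistrib (X k) (X 0) μ μ)
include hXm hXindep hXident

theorem map_dropSeq_eq (t : ℕ) :
    μ.map (fun a => dropSeq t (fun j => X j a)) = μ.map (fun a j => X j a) := by
  have hshift : iIndepFun (fun j => X (t + j)) μ := hXindep.precomp (add_right_injective t)
  change μ.map (fun a j => X (t + j) a) = _
  rw [hshift.map_fun_eq_infinitePi_map (fun j => hXm _),
    hXindep.map_fun_eq_infinitePi_map hXm]
  congr 1
  funext j
  rw [(hXident (t + j)).map_eq, (hXident j).map_eq]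

theorem measure_inter_preimage_dropSeq {t : ℕ} {A : Set Ω}
    (hA : MeasurableSet[⨆ i ∈ Set.Iio t, mE.comap (X i)] A) {D : Set (ℕ → E)}
    (hD : MeasurableSet D) :
    μ (A ∩ (fun a => dropSeq t (fun j => X j a)) ⁻¹' D) =
      μ A * μ ((fun a j => X j a) ⁻¹' D) := by
  have hindep : Indep (⨆ i ∈ Set.Iio t, mE.comap (X i)) (⨆ i ∈ Set.Ici t, mE.comap (X i)) μ :=
    indep_iSup_of_disjoint (fun i => (hXm i).comap_le) ((iIndepFun_iff_iIndep _ _ _).1 hXindep)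
      (Set.Iio_disjoint_Ici le_rfl)
  have hfuture : Measurable[⨆ i ∈ Set.Ici t, mE.comap (X i)]
      (fun a => dropSeq t (fun j => X j a)) :=
    @measurable_pi_lambda _ _ _ (⨆ i ∈ Set.Ici t, mE.comap (X i)) _ _ fun j =>
      measurable_iff_comap_le.2 <|
        le_iSup₂ (f := fun i _ => mE.comap (X i)) (t + j) (Nat.le_add_right t j)
  have hpath : Measurable fun a j => X j a := measurable_pi_lambda _ hXm
  rw [(Indep_iff _ _ _).1 hindep _ _ hA (hfuture hD), ← Measure.map_apply hpath hD,
    ← map_dropSeq_eq hXm hXindep hXident t,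
    Measure.map_apply (f := fun a => dropSeq t fun j => X j a)
      ((measurable_dropSeq t).comp hpath) hD]

end IIDSequence

section IIDCriteria

variable {Ω β : Type*} [MeasurableSpace Ω] [MeasurableSpace β] {μ : Measure Ω}

theorem measure_eq_tsum_inter_preimage_coe {T : Ω → ℕ∞} (hT : Measurable T)
    (hfin : ∀ᵐ a ∂μ, T a ≠ ⊤) {A : Set Ω} (hA : MeasurableSet A) :
    μ A = ∑' t : ℕ, μ (A ∩ T ⁻¹' {(t : ℕ∞)}) := by
  have hunion : A ∩ {a | T a ≠ ⊤} = ⋃ t : ℕ, A ∩ T ⁻¹' {(t : ℕ∞)} := by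
    ext a
    simp [ENat.ne_top_iff_exists, eq_comm]
  rw [← measure_inter_conull (t := {a | T a ≠ ⊤}) (by rw [← ae_iff.1 hfin]; rfl), hunion,
    measure_iUnion]
  · intro s t hst
    exact Disjoint.mono Set.inter_subset_right Set.inter_subset_right
      ((Set.disjoint_singleton.2 (by exact_mod_cast hst)).preimage T)
  · exact fun t => hA.inter (hT (measurableSet_singleton _))

theorem iIndepFun_and_identDistrib_of_measure_iInter_eq_prod {Y : ℕ → Ω → β}
    (hY : ∀ ℓ, Measurable (Y ℓ)) {ν : Measure β}
    (h : ∀ (L : ℕ) (B : ℕ → Set β), (∀ j, MeasurableSet (B j)) →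
      μ (⋂ j ∈ range L, Y j ⁻¹' B j) = ∏ j ∈ range L, ν (B j)) :
    iIndepFun Y μ ∧ ∀ ℓ, IdentDistrib (Y ℓ) (Y 0) μ μ := by
  have hν : ν Set.univ = 1 := by
    have h0 := h 0 (fun _ => Set.univ) fun _ => .univ
    have h1 := h 1 (fun _ => Set.univ) fun _ => .univ
    simp only [range_zero, range_one, Set.preimage_univ] at h0 h1
    simp_all
  have hfinset : ∀ (S : Finset ℕ) (B : ℕ → Set β), (∀ j ∈ S, MeasurableSet (B j)) →
      μ (⋂ j ∈ S, Y j ⁻¹' B j) = ∏ j ∈ S, ν (B j) := by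
    intro S B hB
    classical
    obtain ⟨L, hSL⟩ := Finset.exists_nat_subset_range S
    let B' : ℕ → Set β := fun j => if j ∈ S then B j else Set.univ
    have hinter : ⋂ j ∈ range L, Y j ⁻¹' B' j = ⋂ j ∈ S, Y j ⁻¹' B j := by
      ext a
      simp only [Set.mem_iInter, Set.mem_preimage, B']
      exact ⟨fun H j hj => by simpa [hj] using H j (hSL hj),
        fun H j _ => by split_ifs with hj; exacts [H j hj, Set.mem_univ _]⟩
    have hB' : ∀ j, MeasurableSet (B' j) := fun j => by
      by_cases hj : j ∈ S <;> simp [B', hj, hB]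
    rw [← hinter, h L B' hB', ← Finset.prod_subset hSL fun j _ hj => by simp [B', hj, hν]]
    exact Finset.prod_congr rfl fun j hj => by simp [B', hj]
  have hmarg : ∀ ℓ B, MeasurableSet B → μ (Y ℓ ⁻¹' B) = ν B := fun ℓ B hB => by
    simpa using hfinset {ℓ} (fun _ => B) fun _ _ => hB
  refine ⟨iIndepFun_iff_measure_inter_preimage_eq_mul.2 fun S sets hsets => ?_, fun ℓ => ?_⟩
  · rw [hfinset S sets hsets]
    exact Finset.prod_congr rfl fun j hj => (hmarg j _ (hsets j hj)).symm
  · refine ⟨(hY ℓ).aemeasurable, (hY 0).aemeasurable, Measure.ext fun B hB => ?_⟩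
    rw [Measure.map_apply (hY ℓ) hB, Measure.map_apply (hY 0) hB, hmarg ℓ B hB, hmarg 0 B hB]

theorem iIndepFun_and_identDistrib_of_ae_eq {G Y : ℕ → Ω → β} (hG : ∀ ℓ, Measurable (G ℓ))
    (hGY : ∀ ℓ, G ℓ =ᵐ[μ] Y ℓ) (h : iIndepFun G μ ∧ ∀ ℓ, IdentDistrib (G ℓ) (G 0) μ μ) :
    iIndepFun Y μ ∧ ∀ ℓ, IdentDistrib (Y ℓ) (Y 0) μ μ :=
  ⟨h.1.congr hGY, fun ℓ => (IdentDistrib.of_ae_eq (hG ℓ).aemeasurable (hGY ℓ)).symm.trans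
    ((h.2 ℓ).trans (IdentDistrib.of_ae_eq (hG 0).aemeasurable (hGY 0)))⟩

end IIDCriteria

section RenewalBlocks

variable {Ω E β : Type*} [MeasurableSpace Ω] [MeasurableSpace E] [MeasurableSpace β]
  {μ : Measure Ω} {X : ℕ → Ω → E} {d : (ℕ → E) → ℕ∞} {F : (ℕ → E) → β}
  (hXm : ∀ k, Measurable (X k)) (hXindep : iIndepFun X μ)
  (hXident : ∀ k, IdentDistrib (X k) (X 0) μ μ)
  (hdm : Measurable d) (hd : DeterminedBy d d) (hFm : Measurable F) (hF : DeterminedBy d F)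

include hXm hXindep hXident hdm hd hFm hF in
theorem measure_renewalTime_eq_and_renewalBlock_mem_succ (L t : ℕ) {B : ℕ → Set β}
    (hB : ∀ j, MeasurableSet (B j)) :
    μ {a | renewalTime d L (fun i => X i a) = t ∧
        ∀ j < L + 1, renewalBlock d F j (fun i => X i a) ∈ B j} =
      μ {a | renewalTime d L (fun i => X i a) = t ∧
          ∀ j < L, renewalBlock d F j (fun i => X i a) ∈ B j} *
        μ ((fun a => F (fun i => X i a)) ⁻¹' B L) := by
  let C : Set (ℕ → E) := {h | renewalTime d L h = t ∧ ∀ j < L, renewalBlock d F j h ∈ B j}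
  have hC : MeasurableSet C :=
    measurableSet_setOfPred.2 <|
      ((measurable_renewalTime hdm L) (measurableSet_singleton _)).mem.and <|
        .forall fun j => .forall fun _ => (measurable_renewalBlock hdm hFm j (hB j)).mem
  have hsplit : {a | renewalTime d L (fun i => X i a) = t ∧
      ∀ j < L + 1, renewalBlock d F j (fun i => X i a) ∈ B j} =
      (fun a j => X j a) ⁻¹' C ∩ (fun a => dropSeq t (fun j => X j a)) ⁻¹' (F ⁻¹' B L) := by
    ext a
    simp only [Set.mem_ofPred_eq, Set.mem_inter_iff, Set.mem_preimage, C, Nat.lt_succ_iff_lt_or_eq,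
      or_imp, forall_and, forall_eq]
    refine ⟨fun ⟨hT, hlt, hL⟩ => ⟨⟨hT, hlt⟩, ?_⟩, fun ⟨⟨hT, hlt⟩, hL⟩ => ⟨hT, hlt, ?_⟩⟩ <;>
      simpa only [renewalBlock, hT, ENat.toNat_natCast] using hL
  rw [hsplit, measure_inter_preimage_dropSeq hXm hXindep hXident
    (measurableSet_preimage_of_dependsOn_Iio hC
      (dependsOn_renewalTime_eq_and_renewalBlock_mem hd hF L t B)) (hFm (hB L))]
  rfl

variable (hfin : ∀ ℓ, ∀ᵐ a ∂μ, renewalTime d ℓ (fun j => X j a) ≠ ⊤)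
include hXm hXindep hXident hdm hd hFm hF hfin

theorem measure_renewalBlock_mem_eq_prod (L : ℕ) {B : ℕ → Set β}
    (hB : ∀ j, MeasurableSet (B j)) :
    μ {a | ∀ j < L, renewalBlock d F j (fun i => X i a) ∈ B j} =
      ∏ j ∈ range L, μ ((fun a => F (fun i => X i a)) ⁻¹' B j) := by
  have hpath : Measurable fun a j => X j a := measurable_pi_lambda _ hXm
  have hA : ∀ L', MeasurableSet {a | ∀ j < L', renewalBlock d F j (fun i => X i a) ∈ B j} :=
    fun L' => measurableSet_setOfPred.2 <| .forall fun j => .forall fun _ =>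
      ((measurable_renewalBlock hdm hFm j).comp hpath (hB j)).mem
  induction L with
  | zero => simpa using hXindep.isProbabilityMeasure.measure_univ
  | succ L ih =>
    have hT : Measurable fun a => renewalTime d L (fun j => X j a) :=
      (measurable_renewalTime hdm L).comp hpath
    -- decompose according to the (a.s. finite) start `t` of the `L`-th block
    rw [measure_eq_tsum_inter_preimage_coe hT (hfin L) (hA (L + 1)), prod_range_succ, ← ih,
      measure_eq_tsum_inter_preimage_coe hT (hfin L) (hA L), ← ENNReal.tsum_mul_right]
    refine tsum_congr fun t => ?_
    simp only [Set.inter_comm, ← Set.ofPred_and, Set.preimage, Set.mem_singleton_iff]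
    exact measure_renewalTime_eq_and_renewalBlock_mem_succ hXm hXindep hXident hdm hd hFm hF L t hB

theorem iIndepFun_and_identDistrib_renewalBlock :
    iIndepFun (fun ℓ a => renewalBlock d F ℓ (fun j => X j a)) μ ∧
      ∀ ℓ, IdentDistrib (fun a => renewalBlock d F ℓ (fun j => X j a))
        (fun a => renewalBlock d F 0 (fun j => X j a)) μ μ := by
  have hpath : Measurable fun a j => X j a := measurable_pi_lambda _ hXm
  refine iIndepFun_and_identDistrib_of_measure_iInter_eq_prod
    (fun ℓ => (measurable_renewalBlock hdm hFm ℓ).comp hpath)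
    (ν := μ.map fun a => F (fun i => X i a)) fun L B hB => ?_
  have hset : ⋂ j ∈ range L, (fun a => renewalBlock d F j (fun i => X i a)) ⁻¹' B j =
      {a | ∀ j < L, renewalBlock d F j (fun i => X i a) ∈ B j} := by
    ext a
    simp
  rw [hset, measure_renewalBlock_mem_eq_prod hXm hXindep hXident hdm hd hFm hF hfin L hB]
  exact Finset.prod_congr rfl fun j _ => (Measure.map_apply (hFm.comp hpath) (hB j)).symm

end RenewalBlocks

section RowSpace

theorem measurableSet_mem_span_range {ι V : Type*} [Fintype ι] [NormedAddCommGroup V]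
    [NormedSpace ℝ V] [FiniteDimensional ℝ V] [MeasurableSpace V] [BorelSpace V] (v : V) :
    MeasurableSet {N : ι → V | v ∈ Submodule.span ℝ (Set.range N)} := by
  -- the set is the projection of a closed, hence σ-compact, set of pairs (coefficients, vectors)
  have hproj : {N : ι → V | v ∈ Submodule.span ℝ (Set.range N)} =
      Prod.snd '' {q : (ι → ℝ) × (ι → V) | ∑ i, q.1 i • q.2 i = v} := by
    ext N
    simp [Submodule.mem_span_range_iff_exists_fun]
  have hclosed : IsClosed {q : (ι → ℝ) × (ι → V) | ∑ i, q.1 i • q.2 i = v} :=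
    isClosed_eq (by fun_prop) continuous_const
  obtain ⟨K, hK, hKU⟩ :=
    (isSigmaCompact_univ.of_isClosed_subset hclosed (Set.subset_univ _)).image continuous_snd
  rw [hproj, ← hKU]
  exact .iUnion fun n => (hK n).measurableSet

variable {m n p : ℕ}

theorem rowSpace_mul_le {a : ℕ} (M : Matrix (Fin a) (Fin m) ℝ) (N : Matrix (Fin m) (Fin n) ℝ) :
    rowSpace (M * N) ≤ rowSpace N := by
  rw [rowSpace, Submodule.span_le]
  rintro _ ⟨r, rfl⟩
  rw [SetLike.mem_coe, Matrix.mul_apply_eq_vecMul, Matrix.vecMul_eq_sum]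
  exact Submodule.sum_mem _ fun s _ => Submodule.smul_mem _ _ (Submodule.subset_span ⟨s, rfl⟩)

theorem iSup_rowSpace_eq_span (M : ℕ → Matrix (Fin p) (Fin n) ℝ) (k : ℕ) :
    ⨆ i ∈ range k, rowSpace (M i) =
      Submodule.span ℝ (Set.range fun q : range k × Fin p => M q.1 q.2) := by
  simp only [rowSpace, ← Submodule.span_iUnion₂]
  congr 1
  ext v
  simp only [Set.mem_iUnion, Finset.mem_range, exists_prop]
  constructor
  · rintro ⟨i, hi, r, rfl⟩
    exact ⟨(⟨i, Finset.mem_range.2 hi⟩, r), rfl⟩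
  · rintro ⟨⟨⟨i, hi⟩, r⟩, rfl⟩
    exact ⟨i, Finset.mem_range.1 hi, r, rfl⟩

theorem measurableSet_iSup_rowSpace_mul_eq (C : Matrix (Fin m) (Fin n) ℝ) (k : ℕ) :
    MeasurableSet {h : ℕ → Matrix (Fin m) (Fin p) ℝ |
      ⨆ i ∈ range k, rowSpace ((h i)ᵀ * C) = rowSpace C} := by
  have hstack : Measurable fun (h : ℕ → Matrix (Fin m) (Fin p) ℝ) (q : range k × Fin p) =>
      ((h q.1)ᵀ * C) q.2 := by
    refine measurable_pi_lambda _ fun q => measurable_pi_lambda _ fun j => ?_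
    simp only [Matrix.mul_apply, Matrix.transpose_apply]
    fun_prop
  have hset : {h : ℕ → Matrix (Fin m) (Fin p) ℝ |
      ⨆ i ∈ range k, rowSpace ((h i)ᵀ * C) = rowSpace C} =
      ⋂ r, (fun h (q : range k × Fin p) => ((h q.1)ᵀ * C) q.2) ⁻¹'
        {N | C r ∈ Submodule.span ℝ (Set.range N)} := by
    ext h
    simp only [Set.mem_ofPred_eq, Set.mem_iInter, Set.mem_preimage]
    rw [le_antisymm_iff, and_iff_right (iSup₂_le fun i _ => rowSpace_mul_le _ _),
      iSup_rowSpace_eq_span, rowSpace, Submodule.span_le]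
    exact Set.range_subset_iff
  rw [hset]
  exact .iInter fun r => hstack (measurableSet_mem_span_range _)

end RowSpace

theorem iSup_Icc_eq_iSup_range {α : Type*} [CompleteLattice α] (f : ℕ → α) (t k : ℕ) :
    ⨆ i ∈ Icc (t + 1) (t + k), f i = ⨆ i ∈ range k, f (t + i + 1) := by
  have hIcc : Icc (t + 1) (t + k) = (range k).image (fun i => t + i + 1) := by
    ext i
    simp only [Finset.mem_Icc, Finset.mem_image, Finset.mem_range]
    exact ⟨fun hi => ⟨i - t - 1, by omega, by omega⟩, by rintro ⟨j, hj, rfl⟩; omega⟩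
  rw [hIcc, iSup_finset_image]

section CoverIndex

variable {m n p : ℕ}

/-- For `C = A B^{-1/2}`, the length of the block of sketches that starts right after a
covering time. -/
def coverIndex (C : Matrix (Fin m) (Fin n) ℝ) (h : ℕ → Matrix (Fin m) (Fin p) ℝ) : ℕ∞ :=
  firstIndexAfter 0 fun k => ⨆ i ∈ range k, rowSpace ((h i)ᵀ * C) = rowSpace C

theorem measurable_coverIndex (C : Matrix (Fin m) (Fin n) ℝ) :
    Measurable (coverIndex (p := p) C) :=
  measurable_firstIndexAfter_zero fun k =>
    measurableSet_setOfPred.1 (measurableSet_iSup_rowSpace_mul_eq C k)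

theorem determinedBy_coverIndex (C : Matrix (Fin m) (Fin n) ℝ) :
    DeterminedBy (coverIndex (p := p) C) (coverIndex C) :=
  determinedBy_firstIndexAfter_zero fun k h h' hhh' hP => by
    refine Eq.trans (biSup_congr fun i hi => ?_) hP
    rw [hhh' i (Finset.mem_range.1 hi)]

theorem firstIndexAfter_eq_add_coverIndex (A : Matrix (Fin m) (Fin n) ℝ)
    (Bh : Matrix (Fin n) (Fin n) ℝ) (S : ℕ → Matrix (Fin m) (Fin p) ℝ) (t : ℕ∞) :
    firstIndexAfter t (fun k => ⨆ i ∈ Icc (t.toNat + 1) k, rowSpace ((S i)ᵀ * A * Bh⁻¹) =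
      rowSpace (A * Bh⁻¹)) = t + coverIndex (A * Bh⁻¹) (dropSeq t.toNat fun j => S (j + 1)) := by
  induction t using ENat.recTopCoe with
  | top => rw [firstIndexAfter_top, top_add]
  | coe t =>
    simp only [firstIndexAfter_coe, ENat.toNat_natCast, iSup_Icc_eq_iSup_range, coverIndex,
      dropSeq, Matrix.mul_assoc]

end CoverIndex

theorem stmt5_general {m n p : ℕ} (A : Matrix (Fin m) (Fin n) ℝ)
    (Bhalf : Matrix (Fin n) (Fin n) ℝ)
    {Ω : Type*} [MeasurableSpace Ω] (μ : Measure Ω)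
    (S : ℕ → Ω → Matrix (Fin m) (Fin p) ℝ)
    (hSmeas : ∀ k, Measurable (S k))
    (hSindep : iIndepFun (m := fun _ => matrixMeasurableSpace) S μ)
    (hSident : ∀ k, IdentDistrib (S k) (S 1) μ μ)
    -- the covering times `τ_ℓ` (with `col(Q_i) = row(S_iᵀ A B^{-1/2})`)
    (τ : ℕ → Ω → ℕ∞) (hτ0 : ∀ a, τ 0 a = 0)
    (hτsucc : ∀ ℓ a, τ (ℓ + 1) a =
      sInf {e : ℕ∞ | τ ℓ a < e ∧ ∃ k : ℕ, e = (k : ℕ∞) ∧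
        (⨆ i ∈ Finset.Icc ((τ ℓ a).toNat + 1) k, rowSpace ((S i a)ᵀ * A * Bhalf⁻¹)) =
          rowSpace (A * Bhalf⁻¹)})
    -- "whenever they exist": the covering times are almost surely finite
    (hfin : ∀ ℓ, ∀ᵐ a ∂μ, τ ℓ a ≠ ⊤)
    -- `g` is a fixed measurable function of a block (it only depends on the block length
    -- and on the block entries)
    (g : ℕ∞ × (ℕ → Matrix (Fin m) (Fin p) ℝ) → ℝ) (hg : Measurable g)
    (hgblock : ∀ (d : ℕ∞) (f f' : ℕ → Matrix (Fin m) (Fin p) ℝ),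
      (∀ j : ℕ, (j : ℕ∞) < d → f j = f' j) → g (d, f) = g (d, f')) :
    (iIndepFun (fun ℓ a => τ (ℓ + 1) a - τ ℓ a) μ ∧
      ∀ ℓ, IdentDistrib (fun a => τ (ℓ + 1) a - τ ℓ a) (fun a => τ 1 a - τ 0 a) μ μ) ∧
    (iIndepFun
        (fun ℓ a => g (τ (ℓ + 1) a - τ ℓ a, fun j => S ((τ ℓ a).toNat + 1 + j) a)) μ ∧
      ∀ ℓ, IdentDistrib
        (fun a => g (τ (ℓ + 1) a - τ ℓ a, fun j => S ((τ ℓ a).toNat + 1 + j) a))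
        (fun a => g (τ 1 a - τ 0 a, fun j => S ((τ 0 a).toNat + 1 + j) a)) μ μ) := by
  set d := coverIndex (p := p) (A * Bhalf⁻¹)
  have hτ : ∀ ℓ a, τ ℓ a = renewalTime d ℓ (fun j => S (j + 1) a) := by
    intro ℓ a
    induction ℓ with
    | zero => exact hτ0 a
    | succ ℓ ih => rw [hτsucc, ← firstIndexAfter, firstIndexAfter_eq_add_coverIndex, ih]; rfl
  have hblocks : ∀ ℓ, (fun a => renewalBlock d (blockSummary d g) ℓ (fun j => S (j + 1) a)) =ᵐ[μ]
      fun a => (τ (ℓ + 1) a - τ ℓ a,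
        g (τ (ℓ + 1) a - τ ℓ a, fun j => S ((τ ℓ a).toNat + 1 + j) a)) := fun ℓ => by
    filter_upwards [hfin ℓ] with a ha
    rw [hτ] at ha
    simp only [hτ, renewalBlock_blockSummary ha, add_right_comm]
    rfl
  have hd := determinedBy_coverIndex (p := p) (A * Bhalf⁻¹)
  have hdm := measurable_coverIndex (p := p) (A * Bhalf⁻¹)
  have hpath : Measurable fun a j => S (j + 1) a := measurable_pi_lambda _ fun j => hSmeas _
  obtain ⟨hind, hident⟩ := iIndepFun_and_identDistrib_of_ae_eq
    (fun ℓ => (measurable_renewalBlock hdm (measurable_blockSummary hdm hg) ℓ).comp hpath) hblocks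
    (iIndepFun_and_identDistrib_renewalBlock (fun k => hSmeas (k + 1))
      (hSindep.precomp (add_left_injective 1)) (fun k => hSident (k + 1)) hdm hd
      (measurable_blockSummary hdm hg) (determinedBy_blockSummary hd hgblock)
      fun ℓ => by simpa only [hτ] using hfin ℓ)
  exact ⟨⟨hind.comp (fun _ => Prod.fst) (fun _ => measurable_fst),
      fun ℓ => (hident ℓ).comp measurable_fst⟩,
    ⟨hind.comp (fun _ => Prod.snd) (fun _ => measurable_snd),
      fun ℓ => (hident ℓ).comp measurable_snd⟩⟩

/-- If the sketching matrices `{S_k}` are i.i.d., then (whenever they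
exist) the increments `{τ_ℓ − τ_{ℓ−1}}` are i.i.d., and for any fixed measurable function
`g` of a block, the random variables `γ_ℓ := g(block ℓ)` are i.i.d. across `ℓ`. -/
theorem stmt5 {m n p : ℕ} (A : Matrix (Fin m) (Fin n) ℝ)
    (B Bhalf : Matrix (Fin n) (Fin n) ℝ) (hB : B.PosDef)
    (hBsymm : Bhalfᵀ = Bhalf) (hBsq : Bhalf * Bhalf = B)
    {Ω : Type*} [MeasurableSpace Ω] (μ : Measure Ω) [IsProbabilityMeasure μ]
    (S : ℕ → Ω → Matrix (Fin m) (Fin p) ℝ)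
    (hSmeas : ∀ k, Measurable (S k))
    (hSindep : iIndepFun (m := fun _ => matrixMeasurableSpace) S μ)
    (hSident : ∀ k, IdentDistrib (S k) (S 1) μ μ)
    -- the covering times `τ_ℓ` (with `col(Q_i) = row(S_iᵀ A B^{-1/2})`)
    (τ : ℕ → Ω → ℕ∞) (hτ0 : ∀ a, τ 0 a = 0)
    (hτsucc : ∀ ℓ a, τ (ℓ + 1) a =
      sInf {e : ℕ∞ | τ ℓ a < e ∧ ∃ k : ℕ, e = (k : ℕ∞) ∧
        (⨆ i ∈ Finset.Icc ((τ ℓ a).toNat + 1) k, rowSpace ((S i a)ᵀ * A * Bhalf⁻¹)) =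
          rowSpace (A * Bhalf⁻¹)})
    -- "whenever they exist": the covering times are almost surely finite
    (hfin : ∀ ℓ, ∀ᵐ a ∂μ, τ ℓ a ≠ ⊤)
    -- `g` is a fixed measurable function of a block (it only depends on the block length
    -- and on the block entries)
    (g : ℕ∞ × (ℕ → Matrix (Fin m) (Fin p) ℝ) → ℝ) (hg : Measurable g)
    (hgblock : ∀ (d : ℕ∞) (f f' : ℕ → Matrix (Fin m) (Fin p) ℝ),
      (∀ j : ℕ, (j : ℕ∞) < d → f j = f' j) → g (d, f) = g (d, f')) :
    (iIndepFun (fun ℓ a => τ (ℓ + 1) a - τ ℓ a) μ ∧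
      ∀ ℓ, IdentDistrib (fun a => τ (ℓ + 1) a - τ ℓ a) (fun a => τ 1 a - τ 0 a) μ μ) ∧
    (iIndepFun
        (fun ℓ a => g (τ (ℓ + 1) a - τ ℓ a, fun j => S ((τ ℓ a).toNat + 1 + j) a)) μ ∧
      ∀ ℓ, IdentDistrib
        (fun a => g (τ (ℓ + 1) a - τ ℓ a, fun j => S ((τ ℓ a).toNat + 1 + j) a))
        (fun a => g (τ 1 a - τ 0 a, fun j => S ((τ 0 a).toNat + 1 + j) a)) μ μ) :=
  stmt5_general A Bhalf μ S hSmeas hSindep hSident τ hτ0 hτsucc hfin g hg hgblock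

end
end
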